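/- For every prime power q, every finite set A ⊆ F_q(t) with |A| ≥ 2, and every A-chain C ⊆ A, there exists a separable set S ⊆ C with |S| ≥ |C| / q. -/

import Mathlib

open scoped Classical in
/-- The non-archimedean norm on `F_q(t)`: `|x| = q ^ deg x` for `x ≠ 0`, and `|0| = 0`. -/
noncomputable def ffNorm {F : Type*} [Field F] [Fintype F] (x : RatFunc F) : ℝ :=
  if x = 0 then 0 else (Fintype.card F : ℝ) ^ x.intDegree

/-- A ball in `F_q(t)` with centre `x` and radius `r`. -/
def ffBall {F : Type*} [Field F] [Fintype F] (x : RatFunc F) (r : ℝ) : Set (RatFunc F) :=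
  {y | ffNorm (x - y) ≤ r}

/-- `r_A(a)`: the minimal distance from `a` to another element of `A`. -/
noncomputable def rA {F : Type*} [Field F] [Fintype F] (A : Set (RatFunc F))
    (a : RatFunc F) : ℝ :=
  sInf {r : ℝ | ∃ a' ∈ A, a' ≠ a ∧ r = ffNorm (a - a')}

/-- `B_A(a)`: the ball of radius `r_A(a)` centred at `a`. -/
noncomputable def BA {F : Type*} [Field F] [Fintype F] (A : Set (RatFunc F))
    (a : RatFunc F) : Set (RatFunc F) :=
  ffBall a (rA A a)

/-- `C` is an `A`-chain: a subset of `A` whose elements can be enumerated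
`c₁, …, c_n` with `B_A(c₁) ⊆ ⋯ ⊆ B_A(c_n)`. -/
def IsAChain {F : Type*} [Field F] [Fintype F] (A C : Set (RatFunc F)) : Prop :=
  C ⊆ A ∧ ∃ (n : ℕ) (c : Fin n → RatFunc F), Function.Injective c ∧ C = Set.range c ∧
    ∀ i j : Fin n, i ≤ j → BA A (c i) ⊆ BA A (c j)

/-- A finite set `S ⊆ F_q(t)` is separable if its elements can be enumerated
`a₁, …, a_n` so that for each `j` there is a ball whose intersection with `S`
is exactly `{a₁, …, a_j}`. -/
def SeparableSet {F : Type*} [Field F] [Fintype F] (S : Set (RatFunc F)) : Prop :=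
  ∃ (n : ℕ) (a : Fin n → RatFunc F), Function.Injective a ∧ S = Set.range a ∧
    ∀ j : Fin n, ∃ (x : RatFunc F) (r : ℝ), S ∩ ffBall x r = a '' {i | i ≤ j}

/-!
The norm on `F_q(t)` is an ultrametric absolute value whose residue field is `F_q`. Hence two
points of `A` with the same ball `B_A(a) = B_A(b)` are at distance exactly `r_A(a)`, and `F_q(t)`
contains at most `q` points pairwise at one fixed distance: after rescaling that distance to `1`,
their residues in `F_q` are pairwise distinct. So the `A`-chain `C` meets at most `q` points per
ball and carries at least `|C| / q` distinct balls. Keep one point per ball; ordered by their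
(strictly increasing) balls `B_j`, the kept points satisfy `S ∩ B_j = {a₁, …, a_j}`, because a
point `a_i ∈ B_j` with `B_j ⊆ B_i` forces `B_i = B_j` by the ultrametric inequality.
-/

open Polynomial

section Norm

variable {F : Type*} [Field F] [Fintype F]

lemma one_lt_card_real : (1 : ℝ) < Fintype.card F := by
  exact_mod_cast Fintype.one_lt_card

@[simp]
lemma ffNorm_zero : ffNorm (0 : RatFunc F) = 0 := by
  simp [ffNorm]

lemma ffNorm_of_ne_zero {x : RatFunc F} (hx : x ≠ 0) :
    ffNorm x = (Fintype.card F : ℝ) ^ x.intDegree := by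
  simp [ffNorm, hx]

lemma ffNorm_pos {x : RatFunc F} (hx : x ≠ 0) : 0 < ffNorm x := by
  rw [ffNorm_of_ne_zero hx]
  exact zpow_pos (zero_lt_one.trans one_lt_card_real) _

lemma ffNorm_nonneg (x : RatFunc F) : 0 ≤ ffNorm x := by
  rcases eq_or_ne x 0 with rfl | hx
  · rw [ffNorm_zero]
  · exact (ffNorm_pos hx).le

@[simp]
lemma ffNorm_neg (x : RatFunc F) : ffNorm (-x) = ffNorm x := by
  rcases eq_or_ne x 0 with rfl | hx
  · rw [neg_zero]
  rw [ffNorm_of_ne_zero (neg_ne_zero.mpr hx), ffNorm_of_ne_zero hx, RatFunc.intDegree_neg]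

lemma ffNorm_sub_comm (x y : RatFunc F) : ffNorm (x - y) = ffNorm (y - x) := by
  rw [← neg_sub, ffNorm_neg]

lemma ffNorm_mul (x y : RatFunc F) : ffNorm (x * y) = ffNorm x * ffNorm y := by
  rcases eq_or_ne x 0 with rfl | hx
  · simp
  rcases eq_or_ne y 0 with rfl | hy
  · simp
  rw [ffNorm_of_ne_zero (mul_ne_zero hx hy), ffNorm_of_ne_zero hx, ffNorm_of_ne_zero hy,
    RatFunc.intDegree_mul hx hy, zpow_add₀ (zero_lt_one.trans one_lt_card_real).ne']

@[simp]
lemma ffNorm_inv (x : RatFunc F) : ffNorm x⁻¹ = (ffNorm x)⁻¹ := by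
  rcases eq_or_ne x 0 with rfl | hx
  · simp
  rw [ffNorm_of_ne_zero (inv_ne_zero hx), ffNorm_of_ne_zero hx, RatFunc.intDegree_inv, zpow_neg]

lemma ffNorm_le_ffNorm_iff {x y : RatFunc F} (hx : x ≠ 0) (hy : y ≠ 0) :
    ffNorm x ≤ ffNorm y ↔ x.intDegree ≤ y.intDegree := by
  rw [ffNorm_of_ne_zero hx, ffNorm_of_ne_zero hy, zpow_le_zpow_iff_right₀ one_lt_card_real]

lemma ffNorm_lt_one_iff {x : RatFunc F} : ffNorm x < 1 ↔ x = 0 ∨ x.intDegree < 0 := by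
  rcases eq_or_ne x 0 with rfl | hx
  · simp
  rw [ffNorm_of_ne_zero hx, zpow_lt_one_iff_right₀ one_lt_card_real]
  simp [hx]

lemma ffNorm_eq_one_iff {x : RatFunc F} : ffNorm x = 1 ↔ x ≠ 0 ∧ x.intDegree = 0 := by
  rcases eq_or_ne x 0 with rfl | hx
  · simp
  rw [ffNorm_of_ne_zero hx,
    zpow_eq_one_iff_right₀ (zero_le_one.trans one_lt_card_real.le) one_lt_card_real.ne']
  simp [hx]

lemma ffNorm_add_le_max (x y : RatFunc F) : ffNorm (x + y) ≤ max (ffNorm x) (ffNorm y) := by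
  rcases eq_or_ne (x + y) 0 with hxy | hxy
  · rw [hxy, ffNorm_zero]
    exact le_max_of_le_left (ffNorm_nonneg x)
  rcases eq_or_ne x 0 with rfl | hx
  · rw [zero_add]
    exact le_max_right _ _
  rcases eq_or_ne y 0 with rfl | hy
  · rw [add_zero]
    exact le_max_left _ _
  have hdeg := RatFunc.intDegree_add_le hy hxy
  rcases le_total x.intDegree y.intDegree with hle | hle
  · rw [max_eq_right hle, ← ffNorm_le_ffNorm_iff hxy hy] at hdeg
    exact le_max_of_le_right hdeg
  · rw [max_eq_left hle, ← ffNorm_le_ffNorm_iff hxy hx] at hdeg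
    exact le_max_of_le_left hdeg

lemma ffNorm_sub_le_max (x y : RatFunc F) : ffNorm (x - y) ≤ max (ffNorm x) (ffNorm y) := by
  simpa only [sub_eq_add_neg, ffNorm_neg] using ffNorm_add_le_max x (-y)

/-- `c` is the residue of `x` at infinity, the constant term of its expansion in `1/t`. -/
lemma exists_ffNorm_sub_C_lt_one {x : RatFunc F} (hx : ffNorm x ≤ 1) :
    ∃ c : F, ffNorm (x - RatFunc.C c) < 1 := by
  rcases hx.lt_or_eq with hlt | heq
  · exact ⟨0, by simpa using hlt⟩
  obtain ⟨hx0, hdeg⟩ := ffNorm_eq_one_iff.mp heq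
  have hnum : x.num ≠ 0 := RatFunc.num_ne_zero hx0
  have hnat : x.num.natDegree = x.denom.natDegree := by
    rw [RatFunc.intDegree] at hdeg
    omega
  set c := x.num.leadingCoeff
  set p := x.num - Polynomial.C c * x.denom
  have hc : c ≠ 0 := Polynomial.leadingCoeff_ne_zero.mpr hnum
  have hdenom : algebraMap F[X] (RatFunc F) x.denom ≠ 0 :=
    RatFunc.algebraMap_ne_zero x.denom_ne_zero
  have hx_eq : x - RatFunc.C c =
      algebraMap F[X] (RatFunc F) p / algebraMap F[X] (RatFunc F) x.denom := by
    conv_lhs => rw [← RatFunc.num_div_denom x]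
    rw [← RatFunc.algebraMap_C, map_sub, map_mul, sub_div, mul_div_cancel_right₀ _ hdenom]
  refine ⟨c, ?_⟩
  rw [hx_eq, ffNorm_lt_one_iff]
  rcases eq_or_ne p 0 with hp | hp
  · simp [hp]
  right
  have hlt : p.degree < x.num.degree := by
    refine Polynomial.degree_sub_lt_left ?_ hnum ?_
    · rw [Polynomial.degree_C_mul hc, Polynomial.degree_eq_natDegree hnum,
        Polynomial.degree_eq_natDegree x.denom_ne_zero, hnat]
    · rw [Polynomial.leadingCoeff_C_mul_of_isUnit hc.isUnit, x.monic_denom.leadingCoeff, mul_one]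
  rw [RatFunc.intDegree_div (RatFunc.algebraMap_ne_zero hp) hdenom,
    RatFunc.intDegree_polynomial, RatFunc.intDegree_polynomial, ← hnat, sub_neg]
  exact_mod_cast Polynomial.natDegree_lt_natDegree hp hlt

/-- Rescaled to distance `1`, the points get pairwise distinct residues in `F`. -/
lemma card_le_of_forall_ffNorm_sub_eq (T : Finset (RatFunc F)) (r : ℝ)
    (hT : ∀ x ∈ T, ∀ y ∈ T, x ≠ y → ffNorm (x - y) = r) :
    T.card ≤ Fintype.card F := by
  rcases le_or_gt T.card 1 with hle | hlt
  · exact hle.trans Fintype.one_lt_card.le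
  obtain ⟨x₀, hx₀, x₁, hx₁, hne⟩ := Finset.one_lt_card.mp hlt
  set u := (x₁ - x₀)⁻¹
  have hr : r ≠ 0 := by
    rw [← hT x₁ hx₁ x₀ hx₀ (Ne.symm hne)]
    exact (ffNorm_pos (sub_ne_zero_of_ne (Ne.symm hne))).ne'
  have hunit : ∀ y ∈ T, ∀ z ∈ T, y ≠ z → ffNorm ((y - z) * u) = 1 := by
    intro y hy z hz hyz
    rw [ffNorm_mul, ffNorm_inv, hT y hy z hz hyz, hT x₁ hx₁ x₀ hx₀ (Ne.symm hne),
      mul_inv_cancel₀ hr]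
  have hle : ∀ y ∈ T, ffNorm ((y - x₀) * u) ≤ 1 := by
    intro y hy
    rcases eq_or_ne y x₀ with rfl | hy₀
    · simp
    · exact (hunit y hy x₀ hx₀ hy₀).le
  choose! res hres using fun y hy => exists_ffNorm_sub_C_lt_one (hle y hy)
  have hinj : Set.InjOn res T := by
    intro y hy z hz hres_eq
    by_contra hyz
    set w := fun y => (y - x₀) * u - RatFunc.C (res y)
    have hsplit : (y - z) * u = w y - w z := by
      simp only [w, hres_eq]
      ring
    have := ffNorm_sub_le_max (w y) (w z)
    rw [← hsplit, hunit y hy z hz hyz] at this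
    exact (max_lt (hres y hy) (hres z hz)).not_ge this
  simpa using Finset.card_le_card_of_injOn res (fun _ _ => Finset.mem_univ _) hinj

end Norm

section Balls

variable {F : Type*} [Field F] [Fintype F] {A : Set (RatFunc F)} {a b : RatFunc F}

lemma rA_nonneg : 0 ≤ rA A a :=
  Real.sInf_nonneg (by rintro _ ⟨_, _, _, rfl⟩; exact ffNorm_nonneg _)

lemma rA_le_ffNorm_sub (hb : b ∈ A) (hba : b ≠ a) : rA A a ≤ ffNorm (a - b) :=
  csInf_le ⟨0, by rintro _ ⟨_, _, _, rfl⟩; exact ffNorm_nonneg _⟩ ⟨b, hb, hba, rfl⟩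

lemma mem_BA_self : a ∈ BA A a := by
  simpa [BA, ffBall] using rA_nonneg

lemma ffNorm_sub_eq_rA_of_BA_eq (hb : b ∈ A) (hba : b ≠ a) (h : BA A a = BA A b) :
    ffNorm (a - b) = rA A a :=
  le_antisymm (h ▸ mem_BA_self : b ∈ BA A a) (rA_le_ffNorm_sub hb hba)

lemma rA_eq_of_BA_eq (ha : a ∈ A) (hb : b ∈ A) (h : BA A a = BA A b) : rA A a = rA A b := by
  rcases eq_or_ne b a with rfl | hba
  · rfl
  rw [← ffNorm_sub_eq_rA_of_BA_eq hb hba h, ffNorm_sub_comm,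
    ffNorm_sub_eq_rA_of_BA_eq ha hba.symm h.symm]

lemma BA_eq_of_subset_of_mem (hb : b ∈ A) (hsub : BA A b ⊆ BA A a) (hab : a ∈ BA A b) :
    BA A a = BA A b := by
  rcases eq_or_ne b a with rfl | hba
  · rfl
  refine hsub.antisymm' fun y hy => ?_
  have hab' : ffNorm (b - a) ≤ rA A b := hab
  have hra : rA A a ≤ rA A b := (rA_le_ffNorm_sub hb hba).trans (ffNorm_sub_comm a b ▸ hab')
  calc ffNorm (b - y) = ffNorm ((b - a) + (a - y)) := by rw [sub_add_sub_cancel]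
    _ ≤ max (ffNorm (b - a)) (ffNorm (a - y)) := ffNorm_add_le_max _ _
    _ ≤ rA A b := max_le hab' (hy.trans hra)

lemma card_filter_BA_eq_le (T : Finset (RatFunc F)) (hTA : ↑T ⊆ A) (B : Set (RatFunc F)) :
    (T.filter (fun x => BA A x = B)).card ≤ Fintype.card F := by
  rcases (T.filter (fun x => BA A x = B)).eq_empty_or_nonempty with hempty | ⟨x₀, hx₀⟩
  · simp [hempty]
  simp only [Finset.mem_filter] at hx₀
  refine card_le_of_forall_ffNorm_sub_eq _ (rA A x₀) fun x hx y hy hxy => ?_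
  simp only [Finset.mem_filter] at hx hy
  have hxy_ball : BA A x = BA A y := hx.2.trans hy.2.symm
  rw [ffNorm_sub_eq_rA_of_BA_eq (hTA hy.1) hxy.symm hxy_ball,
    rA_eq_of_BA_eq (hTA hx.1) (hTA hx₀.1) (hx.2.trans hx₀.2.symm)]

lemma ncard_le_card_mul_ncard_image_BA {C : Set (RatFunc F)} (hC : C.Finite) (hCA : C ⊆ A) :
    C.ncard ≤ Fintype.card F * (BA A '' C).ncard := by
  obtain ⟨T, rfl⟩ := hC.exists_finset_coe
  classical
  rw [Set.ncard_coe_finset, ← Finset.coe_image, Set.ncard_coe_finset]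
  exact Finset.card_le_mul_card_image T _ fun B _ => card_filter_BA_eq_le T hCA B

lemma separableSet_range_of_strictMono_BA {k : ℕ} (a : Fin k → RatFunc F)
    (ha : ∀ i, a i ∈ A) (hmono : StrictMono (BA A ∘ a)) : SeparableSet (Set.range a) := by
  refine ⟨k, a, hmono.injective.of_comp, rfl, fun j => ⟨a j, rA A (a j), ?_⟩⟩
  ext y
  constructor
  · rintro ⟨⟨i, rfl⟩, hij⟩
    refine ⟨i, le_of_not_gt fun hji => (hmono hji).ne ?_, rfl⟩
    exact BA_eq_of_subset_of_mem (ha j) (hmono hji).le hij |>.symm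
  · rintro ⟨i, hij, rfl⟩
    exact ⟨⟨i, rfl⟩, hmono.monotone hij mem_BA_self⟩

end Balls

/-- Keeping the first index of each value of a monotone map. -/
lemma Monotone.exists_strictMono_comp_range_eq {α β : Type*} [LinearOrder α] [Fintype α]
    [PartialOrder β] {f : α → β} (hf : Monotone f) :
    ∃ (k : ℕ) (e : Fin k → α),
      StrictMono (f ∘ e) ∧ Set.range (f ∘ e) = Set.range f := by
  classical
  set firsts := Finset.univ.filter fun i => ∀ j, f j = f i → i ≤ j
  set e := firsts.orderEmbOfFin rfl
  have he : ∀ m, e m ∈ firsts := fun m => firsts.orderEmbOfFin_mem rfl m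
  refine ⟨firsts.card, e, fun m m' hmm' => ?_, ?_⟩
  · refine (hf (e.strictMono hmm').le).lt_of_ne fun heq => ?_
    exact (e.strictMono hmm').not_ge ((Finset.mem_filter.mp (he m')).2 _ heq)
  · refine (Set.range_comp_subset_range e f).antisymm ?_
    rintro _ ⟨i, rfl⟩
    obtain ⟨i₀, hi₀, hmin⟩ := (Finset.univ.filter fun j => f j = f i).exists_min_image id
      ⟨i, Finset.mem_filter.mpr ⟨Finset.mem_univ _, rfl⟩⟩
    have hi₀' : f i₀ = f i := (Finset.mem_filter.mp hi₀).2
    have hfirst : i₀ ∈ firsts := Finset.mem_filter.mpr ⟨Finset.mem_univ _, fun j hj =>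
      hmin j (Finset.mem_filter.mpr ⟨Finset.mem_univ _, hj.trans hi₀'⟩)⟩
    obtain ⟨m, hm⟩ : i₀ ∈ Set.range e := by
      rw [Finset.range_orderEmbOfFin]
      exact hfirst
    exact ⟨m, by simp [hm, hi₀']⟩

theorem stmt19_general (F : Type) [Field F] [Fintype F]
    (A : Set (RatFunc F))
    (C : Set (RatFunc F)) (hC : IsAChain A C) :
    ∃ S ⊆ C, SeparableSet S ∧ (C.ncard : ℝ) / (Fintype.card F : ℝ) ≤ (S.ncard : ℝ) := by
  obtain ⟨hCA, n, c, -, rfl, hchain⟩ := hC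
  obtain ⟨k, e, hmono, hrange⟩ :=
    Monotone.exists_strictMono_comp_range_eq (f := BA A ∘ c) hchain
  have hinj : Function.Injective (c ∘ e) := hmono.injective.of_comp (f := BA A)
  refine ⟨Set.range (c ∘ e), Set.range_comp_subset_range e c,
    separableSet_range_of_strictMono_BA _ (fun i => hCA ⟨e i, rfl⟩) hmono, ?_⟩
  have hcount := ncard_le_card_mul_ncard_image_BA (Set.finite_range c) hCA
  rw [← Set.range_comp, ← hrange, Set.ncard_range_of_injective hmono.injective] at hcount
  rw [Set.ncard_range_of_injective hinj, div_le_iff₀ (zero_lt_one.trans one_lt_card_real)]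
  exact_mod_cast hcount.trans_eq (mul_comm _ _)

theorem stmt19 (F : Type) [Field F] [Fintype F]
    (A : Set (RatFunc F)) (hA : A.Finite) (h2 : 2 ≤ A.ncard)
    (C : Set (RatFunc F)) (hC : IsAChain A C) :
    ∃ S ⊆ C, SeparableSet S ∧ (C.ncard : ℝ) / (Fintype.card F : ℝ) ≤ (S.ncard : ℝ) :=
  stmt19_general F A C hC
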